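/- arXiv:1706.02211 — 2 statements merged into one kernel-verified Lean document; each statement's English description precedes it below -/
import Mathlib

section
/- Let X* be an optimal solution of the multicommodity problem (Q) (minimizing F over nonnegative flows satisfying flow conservation), and define P*_{ij} = (2^{Σ_m x*_{ij}(m)} − 1)/f_{ij}. If additionally Σ_{j:(i,j)∈E} P*_{ij} ≤ P_max for all i, then (X*, P*) is an optimal solution of problem (P). -/
open Finset

/-- Feasibility for problem (Q): nonnegative flows satisfying flow conservation. -/
def FeasQ {V E M : Type*} [Fintype E] [DecidableEq V]
    (src tgt : E → V) (s : V → M → ℝ) (x : E → M → ℝ) : Prop :=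
  (∀ e m, 0 ≤ x e m) ∧
  (∀ i m, (∑ e ∈ univ.filter (fun e => tgt e = i), x e m)
        - (∑ e ∈ univ.filter (fun e => src e = i), x e m) + s i m = 0)

/-- Objective of problem (Q) with weights `w_{ij} = f_{i,C}/f_{ij}`. -/
noncomputable def objQ {V E M : Type*} [Fintype E] [Fintype M]
    (src : E → V) (f : E → ℝ) (fC : V → ℝ) (x : E → M → ℝ) : ℝ :=
  ∑ e, (fC (src e) / f e) * (2 : ℝ) ^ (∑ m, x e m)

/-- Feasibility for problem (P). -/
def FeasP {V E M : Type*} [Fintype E] [Fintype M] [DecidableEq V]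
    (src tgt : E → V) (f : E → ℝ) (s : V → M → ℝ) (Pmax : ℝ)
    (x : E → M → ℝ) (P : E → ℝ) : Prop :=
  (∀ e m, 0 ≤ x e m) ∧ (∀ e, 0 ≤ P e) ∧
  (∀ e, ∑ m, x e m ≤ Real.logb 2 (1 + f e * P e)) ∧
  (∀ i m, (∑ e ∈ univ.filter (fun e => tgt e = i), x e m)
        - (∑ e ∈ univ.filter (fun e => src e = i), x e m) + s i m = 0) ∧
  (∀ i, ∑ e ∈ univ.filter (fun e => src e = i), P e ≤ Pmax)

/-- Objective of problem (P). -/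
def objP {V E M : Type*} [Fintype E] (src : E → V) (fC : V → ℝ) (_x : E → M → ℝ)
    (P : E → ℝ) : ℝ :=
  ∑ e, P e * fC (src e)

/-!
The power `P = (2^t - 1)/f` meets the capacity constraint with equality, and with it the cost of (P)
is `objQ xs - ∑ e, fC (src e) / f e`. Any feasible `(y, Q)` of (P) has `y` feasible for (Q), and its
capacity constraint `∑ y ≤ log₂ (1 + f Q)` means `f Q ≥ 2^{∑ y} - 1`, so its cost is at least
`objQ y - ∑ e, fC (src e) / f e`, which by optimality of `xs` is at least the former.
-/

lemma sub_one_le_mul_of_le_logb_two {t f Q : ℝ} (hf : 0 ≤ f) (hQ : 0 ≤ Q)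
    (ht : t ≤ Real.logb 2 (1 + f * Q)) : (2 : ℝ) ^ t - 1 ≤ f * Q := by
  have hpos : 0 < 1 + f * Q := by linarith [mul_nonneg hf hQ]
  linarith [(Real.le_logb_iff_rpow_le one_lt_two hpos).1 ht]

lemma one_add_mul_rpow_sub_one_div {t f : ℝ} (hf : f ≠ 0) :
    1 + f * (((2 : ℝ) ^ t - 1) / f) = 2 ^ t := by
  field_simp
  ring

lemma FeasP.feasQ {V E M : Type*} [Fintype E] [Fintype M] [DecidableEq V]
    {src tgt : E → V} {f : E → ℝ} {s : V → M → ℝ} {Pmax : ℝ} {x : E → M → ℝ} {P : E → ℝ}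
    (h : FeasP src tgt f s Pmax x P) : FeasQ src tgt s x :=
  ⟨h.1, h.2.2.2.1⟩

section Objectives

variable {V E M : Type*} [Fintype E] [Fintype M] (src : E → V) {f : E → ℝ} (fC : V → ℝ)

lemma objP_eq_objQ_sub {x : E → M → ℝ} {P : E → ℝ}
    (hP : ∀ e, P e = ((2 : ℝ) ^ (∑ m, x e m) - 1) / f e) :
    objP src fC x P = objQ src f fC x - ∑ e, fC (src e) / f e := by
  rw [objP, objQ, ← sum_sub_distrib]
  refine sum_congr rfl fun e _ => ?_
  rw [hP e]
  ring

lemma objQ_sub_le_objP {tgt : E → V} [DecidableEq V] {s : V → M → ℝ} {Pmax : ℝ}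
    {y : E → M → ℝ} {Q : E → ℝ} (hf : ∀ e, 0 < f e) (hfC : ∀ i, 0 ≤ fC i)
    (hyQ : FeasP src tgt f s Pmax y Q) :
    objQ src f fC y - ∑ e, fC (src e) / f e ≤ objP src fC y Q := by
  rw [objP, objQ, ← sum_sub_distrib]
  refine sum_le_sum fun e _ => ?_
  have hcap := sub_one_le_mul_of_le_logb_two (hf e).le (hyQ.2.1 e) (hyQ.2.2.1 e)
  calc fC (src e) / f e * 2 ^ (∑ m, y e m) - fC (src e) / f e
      = fC (src e) / f e * (2 ^ (∑ m, y e m) - 1) := by ring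
    _ ≤ fC (src e) / f e * (f e * Q e) := by
      gcongr
      exact div_nonneg (hfC _) (hf e).le
    _ = Q e * fC (src e) := by field_simp [(hf e).ne']

end Objectives

lemma feasP_of_feasQ {V E M : Type*} [Fintype E] [Fintype M] [DecidableEq V]
    {src tgt : E → V} {f : E → ℝ} {s : V → M → ℝ} {Pmax : ℝ} {x : E → M → ℝ} {P : E → ℝ}
    (hf : ∀ e, 0 < f e) (hx : FeasQ src tgt s x)
    (hP : ∀ e, P e = ((2 : ℝ) ^ (∑ m, x e m) - 1) / f e)
    (hbudget : ∀ i, ∑ e ∈ univ.filter (fun e => src e = i), P e ≤ Pmax) :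
    FeasP src tgt f s Pmax x P := by
  refine ⟨hx.1, fun e => ?_, fun e => ?_, hx.2, hbudget⟩
  · have : (1 : ℝ) ≤ 2 ^ (∑ m, x e m) :=
      Real.one_le_rpow one_le_two (sum_nonneg fun m _ => hx.1 e m)
    rw [hP e]
    exact div_nonneg (by linarith) (hf e).le
  · rw [hP e, one_add_mul_rpow_sub_one_div (hf e).ne', Real.logb_rpow two_pos (by norm_num)]

theorem Q_solution_solves_P_general {V E M : Type*}
    [Fintype E] [Fintype M] [DecidableEq V]
    (src tgt : E → V) (f : E → ℝ) (hf : ∀ e, 0 < f e)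
    (fC : V → ℝ) (hfC : ∀ i, 0 < fC i) (s : V → M → ℝ) (Pmax : ℝ)
    (xs : E → M → ℝ)
    (hQfeas : FeasQ src tgt s xs)
    (hQopt : ∀ y, FeasQ src tgt s y → objQ src f fC xs ≤ objQ src f fC y)
    (Ps : E → ℝ)
    (hPs : ∀ e, Ps e = ((2 : ℝ) ^ (∑ m, xs e m) - 1) / f e)
    (hbudget : ∀ i, ∑ e ∈ univ.filter (fun e => src e = i), Ps e ≤ Pmax) :
    FeasP src tgt f s Pmax xs Ps ∧
    ∀ y Q, FeasP src tgt f s Pmax y Q → objP src fC xs Ps ≤ objP src fC y Q := by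
  refine ⟨feasP_of_feasQ hf hQfeas hPs hbudget, fun y Q hyQ => ?_⟩
  calc objP src fC xs Ps = objQ src f fC xs - ∑ e, fC (src e) / f e :=
        objP_eq_objQ_sub src fC hPs
    _ ≤ objQ src f fC y - ∑ e, fC (src e) / f e := by linarith [hQopt y hyQ.feasQ]
    _ ≤ objP src fC y Q := objQ_sub_le_objP src fC hf (fun i => (hfC i).le) hyQ

/-- If `X*` is optimal for the multicommodity problem (Q) and the recovered powers
`P*_{ij} = (2^{Σ_m x*_{ij}(m)} − 1)/f_{ij}` satisfy the per-node power budgets, then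
`(X*, P*)` is an optimal solution of problem (P). -/
theorem Q_solution_solves_P {V E M : Type*}
    [Fintype V] [Fintype E] [Fintype M] [DecidableEq V]
    (src tgt : E → V) (f : E → ℝ) (hf : ∀ e, 0 < f e)
    (fC : V → ℝ) (hfC : ∀ i, 0 < fC i) (s : V → M → ℝ) (Pmax : ℝ)
    (xs : E → M → ℝ)
    (hQfeas : FeasQ src tgt s xs)
    (hQopt : ∀ y, FeasQ src tgt s y → objQ src f fC xs ≤ objQ src f fC y)
    (Ps : E → ℝ)
    (hPs : ∀ e, Ps e = ((2 : ℝ) ^ (∑ m, xs e m) - 1) / f e)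
    (hbudget : ∀ i, ∑ e ∈ univ.filter (fun e => src e = i), Ps e ≤ Pmax) :
    FeasP src tgt f s Pmax xs Ps ∧
    ∀ y Q, FeasP src tgt f s Pmax y Q → objP src fC xs Ps ≤ objP src fC y Q :=
  Q_solution_solves_P_general src tgt f hf fC hfC s Pmax xs hQfeas hQopt Ps hPs hbudget
end

section
/- The Hessian Σ_{j∈N_i} w_{ij} 2^{a_jᵀx_i}(ln 2)² a_j a_jᵀ + ρ(I_M ⊗ C_iᵀC_i) of the local augmented Lagrangian has rank exactly M·|N_i|, and its kernel consists of all vectors vanishing on coordinates (j, m) with j ∈ N_i. -/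
/-!
Both summands of the Hessian are positive semidefinite: `Σ c_j a_j a_jᵀ` with `c_j ≥ 0`, and
`ρ (I_M ⊗ CᵀC)`; here `a_j = 𝟙_M ⊗ e_j` is `Pi.single j 1 ∘ Prod.snd`. Hence `H v = 0` iff `v` lies in both kernels. Since `i ∉ N_i`, the row of `C`
indexed by `l ∈ N_i` is `-e_lᵀ`, and the columns of `C` outside `N_i` vanish, so `C u = 0` iff
`u` vanishes on `N_i`. Vectors vanishing on the coordinates `(m, j)`, `j ∈ N_i`, are also
annihilated by every `a_jᵀ`, so they form the kernel of `H`, whose codimension is `M·|N_i|`.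
-/

open Matrix Finset
open scoped Kronecker ComplexOrder

theorem Matrix.PosSemidef.add_mulVec_eq_zero_iff {n 𝕜 : Type*} [Fintype n] [RCLike 𝕜]
    {A B : Matrix n n 𝕜} (hA : A.PosSemidef) (hB : B.PosSemidef) (x : n → 𝕜) :
    (A + B) *ᵥ x = 0 ↔ A *ᵥ x = 0 ∧ B *ᵥ x = 0 := by
  rw [← (hA.add hB).dotProduct_mulVec_zero_iff, ← hA.dotProduct_mulVec_zero_iff,
    ← hB.dotProduct_mulVec_zero_iff, add_mulVec, dotProduct_add]
  exact add_eq_zero_iff_of_nonneg (hA.dotProduct_mulVec_nonneg x) (hB.dotProduct_mulVec_nonneg x)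

theorem Matrix.one_kronecker_mulVec_apply {m n l R : Type*} [Fintype m] [Fintype n]
    [DecidableEq m] [CommSemiring R] (B : Matrix l n R) (v : m × n → R) (i : m) (j : l) :
    (((1 : Matrix m m R) ⊗ₖ B) *ᵥ v) (i, j) = (B *ᵥ fun k ↦ v (i, k)) j := by
  simp [mulVec, dotProduct, kroneckerMap_apply, Fintype.sum_prod_type, one_apply, ite_mul]

theorem Matrix.one_kronecker_mulVec_eq_zero_iff {m n l R : Type*} [Fintype m] [Fintype n]
    [DecidableEq m] [CommSemiring R] (B : Matrix l n R) (v : m × n → R) :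
    ((1 : Matrix m m R) ⊗ₖ B) *ᵥ v = 0 ↔ ∀ i, B *ᵥ (fun k ↦ v (i, k)) = 0 := by
  simp only [funext_iff, Prod.forall, one_kronecker_mulVec_apply, Pi.zero_apply]

theorem Matrix.rank_eq_card_of_mulVec_eq_zero_iff {m n K : Type*} [Fintype n] [Field K]
    (A : Matrix m n K) (s : Finset n) (h : ∀ v, A *ᵥ v = 0 ↔ ∀ p ∈ s, v p = 0) :
    A.rank = s.card := by
  set restrict := LinearMap.funLeft K K (Subtype.val : s → n)
  have hker : LinearMap.ker A.mulVecLin = LinearMap.ker restrict := by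
    ext v
    simp [h, restrict, funext_iff]
  have hA := LinearMap.finrank_range_add_finrank_ker A.mulVecLin
  have hr := LinearMap.finrank_range_add_finrank_ker restrict
  rw [LinearMap.range_eq_top.mpr (LinearMap.funLeft_surjective_of_injective K K _
    Subtype.val_injective), finrank_top] at hr
  rw [hker] at hA
  simp only [Module.finrank_fintype_fun_eq_card, Fintype.card_coe] at hA hr
  rw [rank]
  omega

def neighborhoodIncidence {n R : Type*} [DecidableEq n] [Zero R] [One R] [Neg R]
    (i : n) (s : Finset n) : Matrix n n R :=
  of fun l k ↦ if l = i ∧ k ∈ s then 1 else if l = k ∧ k ∈ s then -1 else 0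

theorem neighborhoodIncidence_mulVec_eq_zero_iff {n R : Type*} [Fintype n] [DecidableEq n]
    [Ring R] {i : n} {s : Finset n} (hi : i ∉ s) (u : n → R) :
    neighborhoodIncidence i s *ᵥ u = 0 ↔ ∀ k ∈ s, u k = 0 := by
  constructor
  · intro h k hk
    have hki : k ≠ i := fun hki ↦ hi (hki ▸ hk)
    simpa [neighborhoodIncidence, mulVec, dotProduct, hki, ite_and, hk] using congrFun h k
  · intro h
    ext l
    refine Finset.sum_eq_zero fun k _ ↦ ?_
    by_cases hk : k ∈ s
    · simp [h k hk]
    · simp [neighborhoodIncidence, hk]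

theorem localHessian_mulVec_eq_zero_iff {m n l : Type*} [Fintype m] [Fintype n] [Fintype l]
    [DecidableEq m] [DecidableEq n] {s : Finset n} {c : n → ℝ} (hc : ∀ j ∈ s, 0 ≤ c j)
    {ρ : ℝ} (hρ : 0 < ρ) {C : Matrix l n ℝ} (hC : ∀ u, C *ᵥ u = 0 ↔ ∀ k ∈ s, u k = 0)
    (v : m × n → ℝ) :
    (∑ j ∈ s, c j • vecMulVec (Pi.single j 1 ∘ Prod.snd) (Pi.single j 1 ∘ Prod.snd) +
        ρ • ((1 : Matrix m m ℝ) ⊗ₖ (Cᵀ * C))) *ᵥ v = 0 ↔ ∀ p : m × n, p.2 ∈ s → v p = 0 := by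
  have hA : (∑ j ∈ s, c j • vecMulVec (Pi.single j 1 ∘ Prod.snd)
      (Pi.single j 1 ∘ Prod.snd) : Matrix (m × n) (m × n) ℝ).PosSemidef :=
    posSemidef_sum s fun j hj ↦ (posSemidef_vecMulVec_self_star _).smul (hc j hj)
  have hB : (ρ • ((1 : Matrix m m ℝ) ⊗ₖ (Cᵀ * C))).PosSemidef :=
    (PosSemidef.one.kronecker (posSemidef_conjTranspose_mul_self C)).smul hρ.le
  rw [hA.add_mulVec_eq_zero_iff hB, smul_mulVec, smul_eq_zero, or_iff_right hρ.ne',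
    one_kronecker_mulVec_eq_zero_iff, ← conjTranspose_eq_transpose_of_trivial]
  simp only [conjTranspose_mul_self_mulVec_eq_zero, hC, Prod.forall]
  refine ⟨fun h i k ↦ h.2 i k, fun h ↦ ⟨?_, h⟩⟩
  rw [sum_mulVec]
  refine Finset.sum_eq_zero fun j hj ↦ ?_
  have hdot : (Pi.single j 1 ∘ Prod.snd) ⬝ᵥ v = 0 := Finset.sum_eq_zero fun p _ ↦ by
    rcases eq_or_ne p.2 j with hp | hp
    · simp [h p.1 p.2 (hp ▸ hj)]
    · simp [hp]
  rw [smul_mulVec, vecMulVec_mulVec, hdot]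
  simp

/-- The Hessian `Σ_{j∈N_i} w_{ij} 2^{a_jᵀx} (ln 2)² a_j a_jᵀ + ρ (I_M ⊗ C_iᵀC_i)` of
the local augmented Lagrangian has rank exactly `M·|N_i|`, and its kernel consists of
all vectors vanishing on the coordinates `(m, j)` with `j ∈ N_i`. -/
theorem localAL_hessian_rank_kernel {N M : ℕ} (i : Fin N)
    (Ni : Finset (Fin N)) (hi : i ∉ Ni)
    (C : Matrix (Fin N) (Fin N) ℝ)
    (hC : ∀ l k, C l k =
      if l = i ∧ k ∈ Ni then 1 else if l = k ∧ k ∈ Ni then -1 else 0)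
    (w : Fin N → ℝ) (hw : ∀ j ∈ Ni, 0 < w j) (ρ : ℝ) (hρ : 0 < ρ)
    (x : Fin M × Fin N → ℝ)
    (H : Matrix (Fin M × Fin N) (Fin M × Fin N) ℝ)
    (hH : ∀ p q, H p q =
        (∑ j ∈ Ni, w j * (2 : ℝ) ^ (∑ m, x (m, j)) * (Real.log 2) ^ 2 *
          ((if p.2 = j then (1 : ℝ) else 0) * (if q.2 = j then (1 : ℝ) else 0)))
        + ρ * (if p.1 = q.1 then (Cᵀ * C) p.2 q.2 else 0)) :
    H.rank = M * Ni.card ∧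
    (∀ v : Fin M × Fin N → ℝ,
      H.mulVec v = 0 ↔ ∀ p : Fin M × Fin N, p.2 ∈ Ni → v p = 0) := by
  obtain rfl : C = neighborhoodIncidence i Ni := Matrix.ext hC
  set c : Fin N → ℝ := fun j ↦ w j * (2 : ℝ) ^ (∑ m, x (m, j)) * Real.log 2 ^ 2
  have hc : ∀ j ∈ Ni, 0 ≤ c j := fun j hj ↦ by
    have := hw j hj
    positivity
  have hH' : H = ∑ j ∈ Ni, c j • vecMulVec (Pi.single j 1 ∘ Prod.snd) (Pi.single j 1 ∘ Prod.snd)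
      + ρ • ((1 : Matrix (Fin M) (Fin M) ℝ) ⊗ₖ
        ((neighborhoodIncidence i Ni)ᵀ * neighborhoodIncidence i Ni)) := by
    ext p q
    simp [hH, c, Matrix.sum_apply, vecMulVec_apply, Pi.single_apply, one_apply, ite_mul]
  have hker : ∀ v, H *ᵥ v = 0 ↔ ∀ p : Fin M × Fin N, p.2 ∈ Ni → v p = 0 :=
    hH' ▸ localHessian_mulVec_eq_zero_iff hc hρ (neighborhoodIncidence_mulVec_eq_zero_iff hi)
  refine ⟨?_, hker⟩
  rw [H.rank_eq_card_of_mulVec_eq_zero_iff (univ ×ˢ Ni) (by simpa using hker), card_product,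
    card_univ, Fintype.card_fin]
end
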